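/- (Optimal machine policy is uniformly random off a path-based reward's support; claim in the proof of the paper's Theorem on one-iteration convergence with path-based rewards.) Let P̂ be a human model, γ > 0, and let the reward be path-based: r(h^T,m^T) = c·1{(h^T,m^T) = (h̄^T,m̄^T)} for a fixed path (h̄^T,m̄^T) and a constant c ∈ ℝ. Then the machine policy Q̂ obtained from the Y_γ backward recursion is uniformly random once the history deviates from the reward path: for every t and every history (h^{t-1}, m^{t-1}) ≠ (h̄^{t-1}, m̄^{t-1}), Q̂(m_t | h^{t-1}, m^{t-1}) = 1/|𝓜| for all m_t ∈ 𝓜; moreover Y_γ(m_t | h^{t-1}, m^{t-1}) = |𝓜|^{T−t} for all such histories and all m_t. -/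
import Mathlib


/-! Common framework: finite-horizon human–machine interaction processes.
Times are 0-indexed: step `t : Fin T` corresponds to the paper's step `t+1`.
A human model gives conditional PMFs `P(h_t | h^{t-1}, m^t)`: the value
`p t h m a` may depend only on `h s` for `s < t`, on `m s` for `s ≤ t`, and on `a`.
A machine policy gives conditional PMFs `Q(m_t | h^{t-1}, m^{t-1})`: the value
`q t h m b` may depend only on `h s`, `m s` for `s < t`, and on `b`. -/

structure HumanModel (T : ℕ) (H M : Type*) [Fintype H] where
  p : Fin T → (Fin T → H) → (Fin T → M) → H → ℝ
  causal : ∀ (t : Fin T) (h h' : Fin T → H) (m m' : Fin T → M),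
      (∀ s, s < t → h s = h' s) → (∀ s, s ≤ t → m s = m' s) → p t h m = p t h' m'
  nonneg : ∀ t h m a, 0 ≤ p t h m a
  sum_one : ∀ t h m, ∑ a, p t h m a = 1

structure MachinePolicy (T : ℕ) (H M : Type*) [Fintype M] where
  q : Fin T → (Fin T → H) → (Fin T → M) → M → ℝ
  causal : ∀ (t : Fin T) (h h' : Fin T → H) (m m' : Fin T → M),
      (∀ s, s < t → h s = h' s) → (∀ s, s < t → m s = m' s) → q t h m = q t h' m'
  nonneg : ∀ t h m b, 0 ≤ q t h m b
  sum_one : ∀ t h m, ∑ b, q t h m b = 1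

variable {T : ℕ} {H M : Type*} [Fintype H] [Fintype M]

/-- Causally conditioned distribution of the human: `P(h^T ‖ m^T)`. -/
noncomputable def HumanModel.cc (P : HumanModel T H M) (h : Fin T → H) (m : Fin T → M) : ℝ :=
  ∏ t, P.p t h m (h t)

/-- Causally conditioned distribution of the machine: `Q(m^T ‖ h^T)`. -/
noncomputable def MachinePolicy.cc (Q : MachinePolicy T H M) (h : Fin T → H) (m : Fin T → M) : ℝ :=
  ∏ t, Q.q t h m (m t)

/-- Joint PMF `PQ(h^T, m^T)`. -/
noncomputable def jointPMF (P : HumanModel T H M) (Q : MachinePolicy T H M)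
    (h : Fin T → H) (m : Fin T → M) : ℝ :=
  P.cc h m * Q.cc h m

/-- Expectation `E_{PQ}[φ(H^T, M^T)]`. -/
noncomputable def expVal (P : HumanModel T H M) (Q : MachinePolicy T H M)
    (φ : (Fin T → H) → (Fin T → M) → ℝ) : ℝ :=
  ∑ h : Fin T → H, ∑ m : Fin T → M, jointPMF P Q h m * φ h m

/-- Causally conditioned entropy of the human, `H_{PQ}(H^T ‖ M^T)`. -/
noncomputable def humanEntropy (P : HumanModel T H M) (Q : MachinePolicy T H M) : ℝ :=
  ∑ h : Fin T → H, ∑ m : Fin T → M, jointPMF P Q h m * (- Real.log (P.cc h m))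

/-- Causally conditioned entropy of the machine, `H_{PQ}(M^T ‖ H^T)`. -/
noncomputable def machineEntropy (P : HumanModel T H M) (Q : MachinePolicy T H M) : ℝ :=
  ∑ h : Fin T → H, ∑ m : Fin T → M, jointPMF P Q h m * (- Real.log (Q.cc h m))

lemma idx_lt (T k : ℕ) [NeZero T] : T - 1 - k < T := by
  have := Nat.pos_of_ne_zero (NeZero.ne T); omega

variable [NeZero T]

/-- Backward recursion for `Y_γ(m_t | h^{t-1}, m^{t-1})`, parameterized by fuel
`k = (T-1) - t`. `Yaux P r γ k h m` is `Y_γ(m_t | h^{t-1}, m^{t-1})` at (0-indexed)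
step `t = T - 1 - k`, where the current machine action `m_t` is read off as `m t`. -/
noncomputable def Yaux (P : HumanModel T H M)
    (r : (Fin T → H) → (Fin T → M) → ℝ) (γ : ℝ) :
    ℕ → (Fin T → H) → (Fin T → M) → ℝ
  | 0, h, m =>
      Real.exp (γ * ∑ a : H, P.p ⟨T - 1, idx_lt T 0⟩ h m a *
        r (Function.update h ⟨T - 1, idx_lt T 0⟩ a) m)
  | k + 1, h, m =>
      Real.exp (∑ a : H, P.p ⟨T - 1 - (k + 1), idx_lt T (k + 1)⟩ h m a *
        Real.log (∑ b : M, Yaux P r γ k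
          (Function.update h ⟨T - 1 - (k + 1), idx_lt T (k + 1)⟩ a)
          (Function.update m ⟨T - 1 - k, idx_lt T k⟩ b)))

/-- `Y_γ(m_t | h^{t-1}, m^{t-1})` at step `t`, with `m_t = m t`. -/
noncomputable def Ycond (P : HumanModel T H M)
    (r : (Fin T → H) → (Fin T → M) → ℝ) (γ : ℝ) (t : Fin T)
    (h : Fin T → H) (m : Fin T → M) : ℝ :=
  Yaux P r γ (T - 1 - t.val) h m

/-- `Q` is the optimal machine policy `Q̂` obtained from the `Y_γ` backward recursion:
`Q̂(m_t | h^{t-1}, m^{t-1}) = Y_γ(m_t | h^{t-1}, m^{t-1}) / Y_γ(h^{t-1}, m^{t-1})`. -/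
def IsOptMachine (P : HumanModel T H M)
    (r : (Fin T → H) → (Fin T → M) → ℝ) (γ : ℝ) (Q : MachinePolicy T H M) : Prop :=
  ∀ (t : Fin T) (h : Fin T → H) (m : Fin T → M) (b : M),
    Q.q t h m b = Ycond P r γ t h (Function.update m t b) /
      ∑ b' : M, Ycond P r γ t h (Function.update m t b')

lemma Yaux_off_path [Nonempty M] [DecidableEq H] [DecidableEq M]
    (Phat : HumanModel T H M) (γ : ℝ)
    (hb : Fin T → H) (mb : Fin T → M) (c : ℝ)
    (r : (Fin T → H) → (Fin T → M) → ℝ)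
    (hr : ∀ h m, r h m = if h = hb ∧ m = mb then c else 0) :
    ∀ (k : ℕ) (h : Fin T → H) (m : Fin T → M),
      (∃ s : Fin T, (s : ℕ) < T - 1 - k ∧ (h s ≠ hb s ∨ m s ≠ mb s)) →
      Yaux Phat r γ k h m = (Fintype.card M : ℝ) ^ k := by
  intro k
  induction k with
  | zero =>
    rintro h m ⟨s, hs, hdev⟩
    have hzero : ∀ a : H, r (Function.update h ⟨T - 1, idx_lt T 0⟩ a) m = 0 := by
      intro a
      rw [hr]
      have hne : s ≠ (⟨T - 1, idx_lt T 0⟩ : Fin T) := by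
        intro hEq
        apply absurd hs
        rw [hEq]
        simp
      rw [if_neg]
      rintro ⟨h1, h2⟩
      rcases hdev with hd | hd
      · apply hd
        have := congrFun h1 s
        rwa [Function.update_of_ne hne] at this
      · exact hd (congrFun h2 s)
    simp only [Yaux, hzero, mul_zero, Finset.sum_const_zero, Real.exp_zero, pow_zero]
  | succ k ih =>
    rintro h m ⟨s, hs, hdev⟩
    have hlt1 : (s : ℕ) < T - 1 - k := by omega
    have hlt2 : T - 1 - (k + 1) < T - 1 - k := by omega
    have hinner : ∀ (a : H) (b : M),
        Yaux Phat r γ k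
          (Function.update h ⟨T - 1 - (k + 1), idx_lt T (k + 1)⟩ a)
          (Function.update m ⟨T - 1 - k, idx_lt T k⟩ b)
          = (Fintype.card M : ℝ) ^ k := by
      intro a b
      apply ih
      refine ⟨s, hlt1, ?_⟩
      have hne1 : s ≠ (⟨T - 1 - (k + 1), idx_lt T (k + 1)⟩ : Fin T) := by
        intro hEq; apply absurd hs; rw [hEq]; simp
      have hne2 : s ≠ (⟨T - 1 - k, idx_lt T k⟩ : Fin T) := by
        intro hEq; apply absurd hlt1; rw [hEq]; simp
      rw [Function.update_of_ne hne1, Function.update_of_ne hne2]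
      exact hdev
    have hcard : 0 < (Fintype.card M : ℝ) := by
      exact_mod_cast Fintype.card_pos
    have hsum : ∀ a : H,
        (∑ b : M, Yaux Phat r γ k
          (Function.update h ⟨T - 1 - (k + 1), idx_lt T (k + 1)⟩ a)
          (Function.update m ⟨T - 1 - k, idx_lt T k⟩ b))
        = (Fintype.card M : ℝ) ^ (k + 1) := by
      intro a
      simp only [hinner, Finset.sum_const, nsmul_eq_mul, Finset.card_univ]
      ring
    simp only [Yaux, hsum]
    rw [← Finset.sum_mul, Phat.sum_one, one_mul,
      Real.exp_log (by positivity)]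

/-- the optimal machine policy is uniformly random off the support of a
path-based reward: if `r(h^T,m^T) = c·1{(h^T,m^T) = (h̄^T,m̄^T)}`, then for every history
that has deviated from the reward path, the optimal policy is uniform,
`Q̂(m_t | h^{t-1}, m^{t-1}) = 1/|𝓜|`, and moreover
`Y_γ(m_t | h^{t-1}, m^{t-1}) = |𝓜|^{T−t}` (with 0-indexed `t`, exponent `T−1−t`). -/
theorem optMachine_uniform_off_path [Nonempty H] [Nonempty M]
    [DecidableEq H] [DecidableEq M]
    (Phat : HumanModel T H M) (γ : ℝ) (hγ : 0 < γ)
    (hb : Fin T → H) (mb : Fin T → M) (c : ℝ)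
    (r : (Fin T → H) → (Fin T → M) → ℝ)
    (hr : ∀ h m, r h m = if h = hb ∧ m = mb then c else 0)
    (Qhat : MachinePolicy T H M) (hQhat : IsOptMachine Phat r γ Qhat) :
    ∀ (t : Fin T) (h : Fin T → H) (m : Fin T → M),
      (∃ s : Fin T, s < t ∧ (h s ≠ hb s ∨ m s ≠ mb s)) →
      (∀ b : M, Qhat.q t h m b = 1 / (Fintype.card M : ℝ)) ∧
      (∀ b : M, Ycond Phat r γ t h (Function.update m t b) =
        (Fintype.card M : ℝ) ^ (T - 1 - t.val)) := by
  rintro t h m ⟨s, hst, hdev⟩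
  have hY : ∀ b : M, Ycond Phat r γ t h (Function.update m t b) =
      (Fintype.card M : ℝ) ^ (T - 1 - t.val) := by
    intro b
    apply Yaux_off_path Phat γ hb mb c r hr
    refine ⟨s, ?_, ?_⟩
    · have h1 : (s : ℕ) < (t : ℕ) := hst
      have h2 : (t : ℕ) < T := t.isLt
      omega
    · have hne : s ≠ t := Fin.ne_of_lt hst
      rw [Function.update_of_ne hne]
      exact hdev
  refine ⟨?_, hY⟩
  intro b
  rw [hQhat t h m b]
  simp only [hY]
  have hcard : 0 < (Fintype.card M : ℝ) := by exact_mod_cast Fintype.card_pos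
  rw [Finset.sum_const, Finset.card_univ, nsmul_eq_mul]
  rw [div_eq_div_iff (by positivity) (by positivity)]
  ring
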